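/- Any linear map between commutative †-Frobenius monoids preserving all of the Frobenius structure is unitary: if (H, m_H, u_H) and (K, m_K, u_K) are commutative †-Frobenius monoids and f : H → K is a linear map satisfying f ∘ m_H = m_K ∘ (f ⊗ f), f(u_H(1)) = u_K(1), δ_K ∘ f = (f ⊗ f) ∘ δ_H, and ε_K ∘ f = ε_H, then f† ∘ f = id_H and f ∘ f† = id_K. -/

import Mathlib

noncomputable section

open scoped TensorProduct ComplexConjugate InnerProductSpace

open scoped TensorProduct ComplexConjugate InnerProductSpace

variable {H : Type*} [NormedAddCommGroup H] [InnerProductSpace ℂ H] [FiniteDimensional ℂ H]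

namespace TensorIP

variable (H) in
/-- A basis of `H ⊗ H` built from an orthonormal basis of `H`. -/
def tb : Module.Basis (Fin (Module.finrank ℂ H) × Fin (Module.finrank ℂ H)) ℂ (H ⊗[ℂ] H) :=
  Module.Basis.tensorProduct (stdOrthonormalBasis ℂ H).toBasis (stdOrthonormalBasis ℂ H).toBasis

variable (H) in
/-- The canonical inner product space structure on `H ⊗ H`, which is determined by
`⟪a ⊗ b, c ⊗ d⟫ = ⟪a,c⟫ * ⟪b,d⟫` (see `TensorIP.inner_tmul` below). -/
def core : InnerProductSpace.Core ℂ (H ⊗[ℂ] H) where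
  inner x y := ∑ p, conj ((tb H).repr x p) * ((tb H).repr y p)
  conj_inner_symm x y := by
    simp only [map_sum, map_mul, starRingEnd_self_apply]
    exact Finset.sum_congr rfl fun p _ => by ring
  re_inner_nonneg x := by
    show 0 ≤ RCLike.re (∑ p, conj ((tb H).repr x p) * ((tb H).repr x p))
    have h : ∀ p : Fin (Module.finrank ℂ H) × Fin (Module.finrank ℂ H),
        conj ((tb H).repr x p) * ((tb H).repr x p)
          = ((Complex.normSq ((tb H).repr x p) : ℝ) : ℂ) := fun p => by
      rw [mul_comm, Complex.mul_conj]
    simp only [h]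
    rw [map_sum]
    refine Finset.sum_nonneg fun p _ => ?_
    simp [Complex.normSq_nonneg]
  add_left x y z := by
    simp only [map_add, Finsupp.add_apply]
    rw [← Finset.sum_add_distrib]
    exact Finset.sum_congr rfl fun p _ => by ring
  smul_left x y r := by
    simp only [map_smul, Finsupp.smul_apply, smul_eq_mul, map_mul, Finset.mul_sum]
    exact Finset.sum_congr rfl fun p _ => by ring
  definite x hx := by
    have hx' : ∑ p, conj ((tb H).repr x p) * ((tb H).repr x p) = 0 := hx
    have h2 : ∑ p, ((Complex.normSq ((tb H).repr x p) : ℝ) : ℂ) = 0 := by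
      rw [← hx']
      exact Finset.sum_congr rfl fun p _ => by rw [mul_comm, Complex.mul_conj]
    have h3 : ∑ p, Complex.normSq ((tb H).repr x p) = 0 := by exact_mod_cast h2
    have h4 : ∀ p ∈ Finset.univ, Complex.normSq ((tb H).repr x p) = 0 :=
      (Finset.sum_eq_zero_iff_of_nonneg fun p _ => Complex.normSq_nonneg _).mp h3
    have h5 : (tb H).repr x = 0 := by
      ext p
      exact Complex.normSq_eq_zero.mp (h4 p (Finset.mem_univ p))
    simpa using (tb H).repr.map_eq_zero_iff.mp h5

instance : NormedAddCommGroup (H ⊗[ℂ] H) :=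
  @InnerProductSpace.Core.toNormedAddCommGroup ℂ (H ⊗[ℂ] H) _ _ _ (core H)

instance : InnerProductSpace ℂ (H ⊗[ℂ] H) := InnerProductSpace.ofCore (core H).toCore

theorem inner_tmul (a b c d : H) :
    @inner ℂ _ InnerProductSpace.toInner (a ⊗ₜ[ℂ] b) (c ⊗ₜ[ℂ] d) = ⟪a, c⟫_ℂ * ⟪b, d⟫_ℂ := by
  have key : ∀ (x y : H) (p : Fin (Module.finrank ℂ H) × Fin (Module.finrank ℂ H)),
      (tb H).repr (x ⊗ₜ[ℂ] y) p
        = ⟪(stdOrthonormalBasis ℂ H) p.1, x⟫_ℂ * ⟪(stdOrthonormalBasis ℂ H) p.2, y⟫_ℂ := by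
    rintro x y ⟨i, j⟩
    rw [tb, Module.Basis.tensorProduct_repr_tmul_apply, smul_eq_mul,
      OrthonormalBasis.coe_toBasis_repr_apply, OrthonormalBasis.coe_toBasis_repr_apply,
      OrthonormalBasis.repr_apply_apply, OrthonormalBasis.repr_apply_apply, mul_comm]
  show (∑ p, conj ((tb H).repr (a ⊗ₜ[ℂ] b) p) * ((tb H).repr (c ⊗ₜ[ℂ] d) p)) = _
  simp only [key, map_mul]
  rw [← Finset.univ_product_univ, Finset.sum_product]
  have h : ∀ i j : Fin (Module.finrank ℂ H),
      (conj ⟪(stdOrthonormalBasis ℂ H) i, a⟫_ℂ * conj ⟪(stdOrthonormalBasis ℂ H) j, b⟫_ℂ) *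
        (⟪(stdOrthonormalBasis ℂ H) i, c⟫_ℂ * ⟪(stdOrthonormalBasis ℂ H) j, d⟫_ℂ)
      = (⟪a, (stdOrthonormalBasis ℂ H) i⟫_ℂ * ⟪(stdOrthonormalBasis ℂ H) i, c⟫_ℂ) *
        (⟪b, (stdOrthonormalBasis ℂ H) j⟫_ℂ * ⟪(stdOrthonormalBasis ℂ H) j, d⟫_ℂ) := by
    intro i j
    rw [inner_conj_symm, inner_conj_symm]; ring
  simp only [h]
  rw [← Finset.sum_mul_sum]
  rw [OrthonormalBasis.sum_inner_mul_inner, OrthonormalBasis.sum_inner_mul_inner]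

end TensorIP

/-- `(H, m, u)` is a commutative †-Frobenius monoid: `m` is associative and commutative,
`u 1` is a two-sided unit for `m`, and the Frobenius law
`(m ⊗ id) ∘ (id ⊗ δ) = δ ∘ m` holds, where `δ := m†`. -/
def IsFrobenius (m : H ⊗[ℂ] H →ₗ[ℂ] H) (u : ℂ →ₗ[ℂ] H) : Prop :=
  (m ∘ₗ TensorProduct.map m LinearMap.id
      = m ∘ₗ TensorProduct.map LinearMap.id m ∘ₗ (TensorProduct.assoc ℂ H H H).toLinearMap)
    ∧ (m ∘ₗ (TensorProduct.comm ℂ H H).toLinearMap = m)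
    ∧ (∀ x : H, m (u 1 ⊗ₜ[ℂ] x) = x)
    ∧ (∀ x : H, m (x ⊗ₜ[ℂ] u 1) = x)
    ∧ (TensorProduct.map m LinearMap.id ∘ₗ (TensorProduct.assoc ℂ H H H).symm.toLinearMap
        ∘ₗ TensorProduct.map LinearMap.id (LinearMap.adjoint m)
      = LinearMap.adjoint m ∘ₗ m)

/-- `ψ` is a copyable element: `δ ψ = ψ ⊗ ψ` and `ε ψ = 1`, where `δ := m†`, `ε := u†`. -/
def Copyable (m : H ⊗[ℂ] H →ₗ[ℂ] H) (u : ℂ →ₗ[ℂ] H) (ψ : H) : Prop :=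
  LinearMap.adjoint m ψ = ψ ⊗ₜ[ℂ] ψ ∧ LinearMap.adjoint u ψ = 1

/-! The Frobenius law makes the adjoint of left multiplication by `x` again a left
multiplication, by `a = (x ·)† 1`. Hence `x = 0` as soon as `x x = 0` (since `‖a x‖² = ⟪x, a x x⟫`
and `‖x‖² = ⟪1, a x⟫`), and the pairing `ε (x y)` is nondegenerate. If `f` and `f†` are both
multiplicative and `f` preserves `ε`, then `f` is injective and `P = f† f` is a positive definite
algebra endomorphism. For an eigenvector `v` of `P` with eigenvalue `μ`, `v v ≠ 0` is an eigenvector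
with eigenvalue `μ²`; applied to the largest and the smallest eigenvalue this forces all
eigenvalues to be `1`, so `P = id`. The hypotheses are symmetric under `f ↦ f†`, which gives
`f f† = id`. -/

open LinearMap Module.End TensorProduct

namespace TensorIP

variable {X Y : Type*} [NormedAddCommGroup X] [InnerProductSpace ℂ X] [FiniteDimensional ℂ X]
  [NormedAddCommGroup Y] [InnerProductSpace ℂ Y] [FiniteDimensional ℂ Y]

theorem adjoint_map (f g : X →ₗ[ℂ] Y) : adjoint (map f g) = map (adjoint f) (adjoint g) := by
  refine ((eq_adjoint_iff _ _).mpr fun z w => ?_).symm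
  induction z using TensorProduct.induction_on with
  | zero => simp
  | add z₁ z₂ h₁ h₂ => simp only [map_add, inner_add_left, h₁, h₂]
  | tmul a b =>
    induction w using TensorProduct.induction_on with
    | zero => simp
    | add w₁ w₂ h₁ h₂ => simp only [map_add, inner_add_right, h₁, h₂]
    | tmul c d => simp [inner_tmul, adjoint_inner_left]

end TensorIP

theorem LinearMap.IsPositive.eq_id_of_map_mul {𝕜 X : Type*} [RCLike 𝕜] [NormedAddCommGroup X]
    [InnerProductSpace 𝕜 X] [FiniteDimensional 𝕜 X] {m : X ⊗[𝕜] X →ₗ[𝕜] X}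
    (hred : ∀ x, m (x ⊗ₜ x) = 0 → x = 0) {P : X →ₗ[𝕜] X} (hP : P.IsPositive)
    (hinj : Function.Injective P) (hmul : ∀ x y, P (m (x ⊗ₜ y)) = m (P x ⊗ₜ P y)) :
    P = LinearMap.id := by
  set B := hP.isSymmetric.eigenvectorBasis rfl
  set μ := hP.isSymmetric.eigenvalues rfl
  have hB : ∀ i, P (B i) = (μ i : 𝕜) • B i := hP.isSymmetric.apply_eigenvectorBasis rfl
  have hpos : ∀ i, 0 < μ i := fun i => (hP.nonneg_eigenvalues rfl i).lt_of_ne' fun h0 =>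
    B.orthonormal.ne_zero i (hinj (by simp [hB, show μ i = 0 from h0]))
  have hsq : ∀ i, ∃ j, μ j = μ i ^ 2 := fun i => by
    have hv : HasEigenvector P ((μ i ^ 2 : ℝ) : 𝕜) (m (B i ⊗ₜ B i)) := by
      refine ⟨mem_eigenspace_iff.mpr ?_, fun h => B.orthonormal.ne_zero i (hred _ h)⟩
      rw [hmul, hB, smul_tmul_smul, map_smul]
      push_cast; ring_nf
    obtain ⟨j, hj⟩ := hP.isSymmetric.exists_eigenvalues_eq rfl (hasEigenvalue_of_hasEigenvector hv)
    exact ⟨j, RCLike.ofReal_injective hj⟩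
  refine B.toBasis.ext fun i => ?_
  have : Nonempty (Fin (Module.finrank 𝕜 X)) := ⟨i⟩
  obtain ⟨imax, himax⟩ := Finite.exists_max μ
  obtain ⟨imin, himin⟩ := Finite.exists_min μ
  have hmax : μ imax ≤ 1 := by
    obtain ⟨j, hj⟩ := hsq imax
    nlinarith [himax j, hpos imax]
  have hmin : 1 ≤ μ imin := by
    obtain ⟨j, hj⟩ := hsq imin
    nlinarith [himin j, hpos imin]
  have : μ i = 1 := le_antisymm ((himax i).trans hmax) (hmin.trans (himin i))
  simp [hB, this]

namespace IsFrobenius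

variable {X Y : Type*} [NormedAddCommGroup X] [InnerProductSpace ℂ X] [FiniteDimensional ℂ X]
  [NormedAddCommGroup Y] [InnerProductSpace ℂ Y] [FiniteDimensional ℂ Y]
  {m : X ⊗[ℂ] X →ₗ[ℂ] X} {u : ℂ →ₗ[ℂ] X}

theorem mul_comm (hF : IsFrobenius m u) (x y : X) : m (x ⊗ₜ y) = m (y ⊗ₜ x) := by
  simpa using congr($(hF.2.1) (y ⊗ₜ x))

theorem mul_assoc (hF : IsFrobenius m u) (x y z : X) :
    m (m (x ⊗ₜ y) ⊗ₜ z) = m (x ⊗ₜ m (y ⊗ₜ z)) := by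
  simpa using congr($(hF.1) ((x ⊗ₜ y) ⊗ₜ z))

theorem map_curry_comp_adjoint (hF : IsFrobenius m u) (x : X) :
    map (curry m x) id ∘ₗ adjoint m = adjoint m ∘ₗ curry m x := by
  have hmap : ∀ w, map (curry m x) id w = map m id ((TensorProduct.assoc ℂ X X X).symm (x ⊗ₜ w)) :=
    fun w => by
      induction w using TensorProduct.induction_on with
      | zero => simp
      | tmul p q => simp
      | add w₁ w₂ h₁ h₂ => simp only [map_add, tmul_add, h₁, h₂]
  ext y
  simpa [hmap] using congr($(hF.2.2.2.2) (x ⊗ₜ y))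

theorem adjoint_curry (hF : IsFrobenius m u) (x : X) :
    adjoint (curry m x) = curry m (adjoint (curry m x) (u 1)) := by
  have h := congr(adjoint $(hF.map_curry_comp_adjoint x))
  rw [adjoint_comp, adjoint_comp, adjoint_adjoint, TensorIP.adjoint_map, adjoint_id] at h
  ext z
  simpa [hF.2.2.1] using congr($h (u 1 ⊗ₜ z)).symm

theorem eq_zero_of_mul_self_eq_zero (hF : IsFrobenius m u) {x : X} (hx : m (x ⊗ₜ x) = 0) :
    x = 0 := by
  set a := adjoint (curry m x) (u 1)
  have hadj : adjoint (curry m a) = curry m x := by rw [← hF.adjoint_curry, adjoint_adjoint]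
  have hax : m (a ⊗ₜ x) = 0 := by
    refine (inner_self_eq_zero (𝕜 := ℂ)).mp ?_
    calc ⟪m (a ⊗ₜ x), m (a ⊗ₜ x)⟫_ℂ = ⟪x, adjoint (curry m a) (curry m a x)⟫_ℂ := by
          rw [adjoint_inner_right]; rfl
      _ = ⟪x, m (a ⊗ₜ m (x ⊗ₜ x))⟫_ℂ := by
          rw [hadj, curry_apply, curry_apply, ← hF.mul_assoc, hF.mul_comm x a, hF.mul_assoc]
      _ = 0 := by rw [hx, tmul_zero, map_zero, inner_zero_right]
  refine (inner_self_eq_zero (𝕜 := ℂ)).mp ?_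
  calc ⟪x, x⟫_ℂ = ⟪curry m x (u 1), x⟫_ℂ := by rw [curry_apply, hF.2.2.2.1]
    _ = ⟪u 1, m (a ⊗ₜ x)⟫_ℂ := by rw [← adjoint_inner_right, hF.adjoint_curry]; rfl
    _ = 0 := by rw [hax, inner_zero_right]

theorem eq_zero_of_counit_mul_eq_zero (hF : IsFrobenius m u) {x : X}
    (hx : ∀ y, adjoint u (m (x ⊗ₜ y)) = 0) : x = 0 := by
  have ha : adjoint (curry m x) (u 1) = 0 := by
    refine (inner_self_eq_zero (𝕜 := ℂ)).mp ?_
    rw [adjoint_inner_left, curry_apply, ← adjoint_inner_right, hx, inner_zero_right]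
  have hcurry : curry m x = 0 := by
    rw [← adjoint_adjoint (curry m x), hF.adjoint_curry, ha, map_zero, map_zero]
  simpa [hF.2.2.2.1] using congr($hcurry (u 1))

theorem adjoint_comp_self_eq_id (hF : IsFrobenius m u)
    {mY : Y ⊗[ℂ] Y →ₗ[ℂ] Y} {uY : ℂ →ₗ[ℂ] Y} {f : X →ₗ[ℂ] Y}
    (hm : f ∘ₗ m = mY ∘ₗ map f f) (hm' : adjoint f ∘ₗ mY = m ∘ₗ map (adjoint f) (adjoint f))
    (hε : adjoint uY ∘ₗ f = adjoint u) :
    adjoint f ∘ₗ f = LinearMap.id := by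
  have hf : ∀ x y, f (m (x ⊗ₜ y)) = mY (f x ⊗ₜ f y) := fun x y => by
    simpa using congr($hm (x ⊗ₜ y))
  have hf' : ∀ a b, adjoint f (mY (a ⊗ₜ b)) = m (adjoint f a ⊗ₜ adjoint f b) := fun a b => by
    simpa using congr($hm' (a ⊗ₜ b))
  have hinj : Function.Injective f := by
    refine (injective_iff_map_eq_zero f).mpr fun x hx => hF.eq_zero_of_counit_mul_eq_zero fun y => ?_
    rw [← hε, comp_apply, hf, hx, zero_tmul, map_zero, map_zero]
  refine (isPositive_adjoint_comp_self f).eq_id_of_map_mul (fun _ => hF.eq_zero_of_mul_self_eq_zero)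
    ((adjoint_comp_self_injective_iff f).mpr hinj) fun x y => ?_
  simp only [comp_apply, hf, hf']

end IsFrobenius

/-- A linear map between commutative †-Frobenius monoids preserving all of the Frobenius
structure is unitary. -/
theorem frobenius_hom_unitary
    {K : Type*} [NormedAddCommGroup K] [InnerProductSpace ℂ K] [FiniteDimensional ℂ K]
    (mH : H ⊗[ℂ] H →ₗ[ℂ] H) (uH : ℂ →ₗ[ℂ] H) (mK : K ⊗[ℂ] K →ₗ[ℂ] K) (uK : ℂ →ₗ[ℂ] K)
    (hH : IsFrobenius mH uH) (hK : IsFrobenius mK uK)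
    (f : H →ₗ[ℂ] K)
    (hm : f ∘ₗ mH = mK ∘ₗ TensorProduct.map f f)
    (hu : f (uH 1) = uK 1)
    (hδ : LinearMap.adjoint mK ∘ₗ f = TensorProduct.map f f ∘ₗ LinearMap.adjoint mH)
    (hε : LinearMap.adjoint uK ∘ₗ f = LinearMap.adjoint uH) :
    LinearMap.adjoint f ∘ₗ f = LinearMap.id ∧ f ∘ₗ LinearMap.adjoint f = LinearMap.id := by
  have hm' : adjoint f ∘ₗ mK = mH ∘ₗ map (adjoint f) (adjoint f) := by
    simpa [adjoint_comp, TensorIP.adjoint_map] using congr(adjoint $hδ)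
  have hε' : adjoint uH ∘ₗ adjoint f = adjoint uK := by
    rw [← adjoint_comp, show f ∘ₗ uH = uK from ext_ring hu]
  refine ⟨hH.adjoint_comp_self_eq_id hm hm' hε, ?_⟩
  simpa using hK.adjoint_comp_self_eq_id hm' (by simpa using hm) hε'
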